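/- arXiv:2604.06919 — 3 statements merged into one kernel-verified Lean document; each statement's English description precedes it below -/
import Mathlib

section
/- The relative entropy admits the dual variational representation: for probability measures μ, ν on a Polish space X, Ent(μ | ν) = sup over bounded continuous φ : X → ℝ of (∫φ dμ − log ∫e^φ dν). -/
/-!
Write `D(φ) = ∫ φ dμ - log ∫ e^φ dν`. Gibbs' inequality for `μ` against the tilted measure
`e^φ ν / ∫ e^φ dν` is exactly `D(φ) ≤ Ent(μ | ν)`.

Conversely, let `f = dμ/dν`. Since `log y ≤ y - 1` and `∫ φ dμ = ∫ f φ dν`, we have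
`D(φ) ≥ ∫ (f φ - e^φ + 1) dν`. The integrand is maximised at `φ = log f`, where it equals
`f log f - f + 1`, whose `ν`-integral is `Ent(μ | ν)`; by Fatou's lemma the truncations of
`log f` to `[-n, n]` reach that value in the limit, finite or not. If `μ` is not absolutely
continuous with respect to `ν`, taking `φ = n` on a `ν`-null set charged by `μ` makes `D`
unbounded.

Finally, the supremum may be restricted to bounded continuous functions: on a metrizable space
a bounded measurable function is an a.e. limit of uniformly bounded continuous ones (density in
`L¹` and clamping), and `D` passes to such limits by dominated convergence.
-/

open MeasureTheory

open scoped Classical in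
/-- Relative entropy `Ent(μ | ν) = ∫ log(dμ/dν) dμ` if `μ ≪ ν` (with value `+∞` when
`μ` is not absolutely continuous w.r.t. `ν` or the integral diverges). -/
noncomputable def Ent {X : Type*} [MeasurableSpace X] (μ ν : Measure X) : EReal :=
  if μ ≪ ν ∧ Integrable (fun x => Real.log ((μ.rnDeriv ν x).toReal)) μ
  then ((∫ x, Real.log ((μ.rnDeriv ν x).toReal) ∂μ : ℝ) : EReal)
  else ⊤

open Filter Topology TopologicalSpace InformationTheory Real
open scoped BoundedContinuousFunction

noncomputable def dvFunctional {X : Type*} [MeasurableSpace X] (μ ν : Measure X) (φ : X → ℝ) :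
    ℝ :=
  ∫ x, φ x ∂μ - log (∫ x, exp (φ x) ∂ν)

-- Clamping `t` from below also keeps `log 0 = 0` from spoiling the case `t = 0`.
noncomputable def truncLog (n : ℕ) (t : ℝ) : ℝ :=
  log (max (min t (exp n)) (exp (-n)))

lemma exp_truncLog (n : ℕ) (t : ℝ) : exp (truncLog n t) = max (min t (exp n)) (exp (-n)) :=
  exp_log (lt_max_of_lt_right (exp_pos _))

lemma abs_truncLog_le (n : ℕ) (t : ℝ) : |truncLog n t| ≤ n := by
  rw [abs_le, ← exp_le_exp, ← exp_le_exp (y := (n : ℝ)), exp_truncLog]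
  exact ⟨le_max_right _ _,
    max_le (min_le_right _ _) (exp_le_exp.2 (neg_le_self n.cast_nonneg))⟩

lemma measurable_truncLog (n : ℕ) : Measurable (truncLog n) := by
  unfold truncLog; fun_prop

lemma mul_truncLog_sub_exp_add_one_nonneg (n : ℕ) (t : ℝ) :
    0 ≤ t * truncLog n t - exp (truncLog n t) + 1 := by
  set y := max (min t (exp n)) (exp (-n)) with hy_def
  have hy : 0 < y := lt_max_of_lt_right (exp_pos _)
  -- `y` lies between `1` and `t`, so the second summand is nonnegative.
  have hsplit : t * log y - y + 1 = klFun y + (t - y) * log y := by rw [klFun]; ring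
  rw [exp_truncLog, truncLog, ← hy_def, hsplit]
  refine add_nonneg (klFun_nonneg hy.le) ?_
  rcases le_total t (exp (-n)) with h | h
  · rw [hy_def, max_eq_right ((min_le_left _ _).trans h), log_exp]
    exact mul_nonneg_of_nonpos_of_nonpos (sub_nonpos.2 h) (neg_nonpos.2 n.cast_nonneg)
  rcases le_total t (exp n) with h' | h'
  · rw [hy_def, min_eq_left h', max_eq_left h, sub_self, zero_mul]
  · rw [hy_def, min_eq_right h', max_eq_left (exp_le_exp.2 (neg_le_self n.cast_nonneg)), log_exp]
    exact mul_nonneg (sub_nonneg.2 h') n.cast_nonneg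

lemma tendsto_mul_truncLog_sub_exp_add_one {t : ℝ} (ht : 0 ≤ t) :
    Tendsto (fun n : ℕ => t * truncLog n t - exp (truncLog n t) + 1) atTop (𝓝 (klFun t)) := by
  rcases ht.eq_or_lt with rfl | ht
  · have hclamp (n : ℕ) : max (min 0 (exp n)) (exp (-n)) = exp (-n) :=
      max_eq_right ((min_le_left _ _).trans (exp_pos _).le)
    simp only [zero_mul, zero_sub, exp_truncLog, hclamp, klFun_zero]
    simpa using ((tendsto_exp_neg_atTop_nhds_zero.comp tendsto_natCast_atTop_atTop).neg.add_const 1)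
  · refine tendsto_const_nhds.congr' ?_
    filter_upwards [eventually_ge_atTop ⌈|log t|⌉₊] with n hn
    obtain ⟨hlo, hhi⟩ := abs_le.1 ((Nat.le_ceil _).trans (Nat.cast_le.2 hn))
    have hclamp : max (min t (exp n)) (exp (-n)) = t := by
      rw [min_eq_left, max_eq_left]
      · exact (exp_le_exp.2 hlo).trans_eq (exp_log ht)
      · exact (exp_log ht).symm.trans_le (exp_le_exp.2 hhi)
    rw [truncLog, hclamp, exp_log ht, klFun]
    ring

section Measure

variable {X : Type*} [MeasurableSpace X] {μ ν ρ : Measure X} {φ : X → ℝ} {c : ℝ}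

lemma integrable_exp_of_abs_le [IsFiniteMeasure ρ] (hφm : Measurable φ) (hφc : ∀ x, |φ x| ≤ c) :
    Integrable (fun x => exp (φ x)) ρ :=
  .of_bound hφm.exp.aestronglyMeasurable (exp c) (ae_of_all _ fun x => by
    rw [norm_eq_abs, abs_exp]; exact exp_le_exp.2 (le_of_abs_le (hφc x)))

variable [IsProbabilityMeasure μ] [IsProbabilityMeasure ν]

lemma Ent_eq_klDiv : Ent μ ν = (klDiv μ ν : EReal) := by
  unfold Ent
  split_ifs with h
  · have hgibbs := integral_llr_add_sub_measure_univ_nonneg h.1 h.2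
    rw [klDiv_of_ac_of_integrable h.1 h.2]
    simp only [probReal_univ, add_sub_cancel_right] at hgibbs ⊢
    rw [EReal.coe_ennreal_ofReal, max_eq_left hgibbs]
    rfl
  · rw [klDiv_eq_top_iff.2 fun hac hint => h ⟨hac, hint⟩, EReal.coe_ennreal_top]

lemma dvFunctional_le_integral_llr (hac : μ ≪ ν) (hllr : Integrable (llr μ ν) μ)
    (hφμ : Integrable φ μ) (hφν : Integrable (fun x => exp (φ x)) ν) :
    dvFunctional μ ν φ ≤ ∫ x, llr μ ν x ∂μ := by
  have := isProbabilityMeasure_tilted hφν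
  have hgibbs := integral_llr_add_sub_measure_univ_nonneg
    (hac.trans (absolutelyContinuous_tilted hφν)) (integrable_llr_tilted_right hac hφμ hllr hφν)
  rw [integral_llr_tilted_right hac hφμ hφν hllr] at hgibbs
  simp only [probReal_univ] at hgibbs
  unfold dvFunctional
  linarith

lemma dvFunctional_le_klDiv (hφμ : Integrable φ μ) (hφν : Integrable (fun x => exp (φ x)) ν) :
    (dvFunctional μ ν φ : EReal) ≤ klDiv μ ν := by
  by_cases htop : klDiv μ ν = ⊤
  · rw [htop, EReal.coe_ennreal_top]
    exact le_top
  obtain ⟨hac, hllr⟩ := klDiv_ne_top_iff.1 htop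
  rw [← EReal.coe_ennreal_toReal htop, toReal_klDiv_of_measure_eq hac (by simp)]
  exact EReal.coe_le_coe_iff.2 (dvFunctional_le_integral_llr hac hllr hφμ hφν)

lemma lintegral_ofReal_le_dvFunctional (hac : μ ≪ ν) (hφm : Measurable φ)
    (hφc : ∀ x, |φ x| ≤ c) (hnonneg : ∀ x, 0 ≤ (μ.rnDeriv ν x).toReal * φ x - exp (φ x) + 1) :
    ∫⁻ x, ENNReal.ofReal ((μ.rnDeriv ν x).toReal * φ x - exp (φ x) + 1) ∂ν ≤
      ENNReal.ofReal (dvFunctional μ ν φ) := by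
  have hexp : Integrable (fun x => exp (φ x)) ν := integrable_exp_of_abs_le hφm hφc
  have hfφ : Integrable (fun x => (μ.rnDeriv ν x).toReal * φ x) ν :=
    Measure.integrable_toReal_rnDeriv.mul_bdd hφm.aestronglyMeasurable (ae_of_all _ hφc)
  have hchange : ∫ x, (μ.rnDeriv ν x).toReal * φ x ∂ν = ∫ x, φ x ∂μ := integral_rnDeriv_smul hac
  have hlog := log_le_sub_one_of_pos (integral_exp_pos hexp)
  have hsub : Integrable (fun x => (μ.rnDeriv ν x).toReal * φ x - exp (φ x)) ν := hfφ.sub hexp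
  have hint : Integrable (fun x => (μ.rnDeriv ν x).toReal * φ x - exp (φ x) + 1) ν :=
    hsub.add (integrable_const 1)
  rw [← ofReal_integral_eq_lintegral_ofReal hint (ae_of_all _ hnonneg)]
  refine ENNReal.ofReal_le_ofReal ?_
  rw [integral_add hsub (integrable_const 1), integral_sub hfφ hexp, hchange]
  simp only [integral_const, probReal_univ, smul_eq_mul, one_mul, dvFunctional]
  linarith

lemma klDiv_le_iSup_ofReal_dvFunctional_truncLog (hac : μ ≪ ν) :
    klDiv μ ν ≤ ⨆ n : ℕ,
      ENNReal.ofReal (dvFunctional μ ν fun x => truncLog n (μ.rnDeriv ν x).toReal) := by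
  set f : X → ℝ := fun x => (μ.rnDeriv ν x).toReal
  have hf : Measurable f := (Measure.measurable_rnDeriv μ ν).ennreal_toReal
  set g : ℕ → X → ℝ := fun n x => f x * truncLog n (f x) - exp (truncLog n (f x)) + 1
  have hg (n : ℕ) : Measurable (g n) := by
    have := (measurable_truncLog n).comp hf
    fun_prop
  calc klDiv μ ν = ∫⁻ x, ENNReal.ofReal (klFun (f x)) ∂ν := klDiv_eq_lintegral_klFun_of_ac hac
    _ = ∫⁻ x, liminf (fun n => ENNReal.ofReal (g n x)) atTop ∂ν := lintegral_congr fun x =>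
        (ENNReal.tendsto_ofReal
          (tendsto_mul_truncLog_sub_exp_add_one ENNReal.toReal_nonneg)).liminf_eq.symm
    _ ≤ liminf (fun n => ∫⁻ x, ENNReal.ofReal (g n x) ∂ν) atTop :=
        lintegral_liminf_le fun n => (hg n).ennreal_ofReal
    _ ≤ ⨆ n, ∫⁻ x, ENNReal.ofReal (g n x) ∂ν := le_trans liminf_le_limsup limsup_le_iSup
    _ ≤ _ := iSup_mono fun n => lintegral_ofReal_le_dvFunctional hac
        ((measurable_truncLog n).comp hf) (fun x => abs_truncLog_le n _)
        (fun x => mul_truncLog_sub_exp_add_one_nonneg n _)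

lemma tendsto_dvFunctional_of_tendsto_ae {ψ : ℕ → X → ℝ} (hψm : ∀ k, Measurable (ψ k))
    (hψc : ∀ k x, |ψ k x| ≤ c) (hφm : Measurable φ) (hφc : ∀ x, |φ x| ≤ c)
    (hμ : ∀ᵐ x ∂μ, Tendsto (ψ · x) atTop (𝓝 (φ x)))
    (hν : ∀ᵐ x ∂ν, Tendsto (ψ · x) atTop (𝓝 (φ x))) :
    Tendsto (fun k => dvFunctional μ ν (ψ k)) atTop (𝓝 (dvFunctional μ ν φ)) := by
  have hint : Tendsto (fun k => ∫ x, ψ k x ∂μ) atTop (𝓝 (∫ x, φ x ∂μ)) :=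
    tendsto_integral_of_dominated_convergence (fun _ => c) (fun k => (hψm k).aestronglyMeasurable)
      (integrable_const c) (fun k => ae_of_all _ (hψc k)) hμ
  have hexp : Tendsto (fun k => ∫ x, exp (ψ k x) ∂ν) atTop (𝓝 (∫ x, exp (φ x) ∂ν)) :=
    tendsto_integral_of_dominated_convergence (fun _ => exp c)
      (fun k => (hψm k).exp.aestronglyMeasurable) (integrable_const _)
      (fun k => ae_of_all _ fun x => by
        rw [norm_eq_abs, abs_exp]; exact exp_le_exp.2 (le_of_abs_le (hψc k x)))
      (hν.mono fun x hx => (continuous_exp.tendsto _).comp hx)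
  exact hint.sub (hexp.log (integral_exp_pos (integrable_exp_of_abs_le hφm hφc)).ne')

end Measure

section Metrizable

variable {X : Type*} [MeasurableSpace X] [TopologicalSpace X] [PseudoMetrizableSpace X]
  [BorelSpace X] {μ ν : Measure X} {φ : X → ℝ} {c : ℝ}

lemma exists_seq_boundedContinuous_tendsto_ae (ρ : Measure X) [IsFiniteMeasure ρ] (hc : 0 ≤ c)
    (hφm : Measurable φ) (hφc : ∀ x, |φ x| ≤ c) :
    ∃ ψ : ℕ → X →ᵇ ℝ, (∀ k x, |ψ k x| ≤ c) ∧
      ∀ᵐ x ∂ρ, Tendsto (fun k => ψ k x) atTop (𝓝 (φ x)) := by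
  have hφ : MemLp φ 1 ρ :=
    memLp_one_iff_integrable.2 (.of_bound hφm.aestronglyMeasurable c (ae_of_all _ hφc))
  choose g hg _ using fun k : ℕ => hφ.exists_boundedContinuous_eLpNorm_sub_le ENNReal.one_ne_top
    (ENNReal.inv_ne_zero.2 (ENNReal.natCast_ne_top k))
  have hconv : TendstoInMeasure ρ (fun k => ⇑(g k)) atTop φ :=
    tendstoInMeasure_of_tendsto_eLpNorm one_ne_zero
      (fun k => (g k).continuous.aestronglyMeasurable) hφm.aestronglyMeasurable
      (tendsto_of_tendsto_of_tendsto_of_le_of_le tendsto_const_nhds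
        ENNReal.tendsto_inv_nat_nhds_zero (fun _ => bot_le)
        fun k => (eLpNorm_sub_comm _ _ _ _).trans_le (hg k))
  obtain ⟨ns, -, hns⟩ := hconv.exists_seq_tendsto_ae
  set C := BoundedContinuousFunction.const X c
  refine ⟨fun k => g (ns k) ⊓ C ⊔ -C, fun k x => ?_, ?_⟩
  · simp only [BoundedContinuousFunction.coe_sup, BoundedContinuousFunction.coe_inf,
      BoundedContinuousFunction.coe_neg, Pi.sup_apply, Pi.inf_apply, Pi.neg_apply, C,
      BoundedContinuousFunction.const_apply]
    exact abs_le.2 ⟨le_max_right _ _, max_le (min_le_right _ _) (by linarith)⟩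
  · filter_upwards [hns] with x hx
    have hclamp : max (min (φ x) c) (-c) = φ x := by
      obtain ⟨h1, h2⟩ := abs_le.1 (hφc x)
      rw [min_eq_left h2, max_eq_left h1]
    simpa [C, hclamp] using (hx.min (tendsto_const_nhds (x := c))).max
      (tendsto_const_nhds (x := -c))

lemma dvFunctional_le_iSup_boundedContinuous [IsProbabilityMeasure μ] [IsProbabilityMeasure ν]
    (hc : 0 ≤ c) (hφm : Measurable φ) (hφc : ∀ x, |φ x| ≤ c) :
    (dvFunctional μ ν φ : EReal) ≤ ⨆ ψ : X →ᵇ ℝ, (dvFunctional μ ν ψ : EReal) := by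
  obtain ⟨ψ, hψc, hψ⟩ := exists_seq_boundedContinuous_tendsto_ae (μ + ν) hc hφm hφc
  rw [ae_add_measure_iff] at hψ
  exact le_of_tendsto' ((continuous_coe_real_ereal.tendsto _).comp
    (tendsto_dvFunctional_of_tendsto_ae (fun k => (ψ k).continuous.measurable) hψc hφm hφc
      hψ.1 hψ.2))
    fun k => le_iSup (fun ψ : X →ᵇ ℝ => (dvFunctional μ ν ψ : EReal)) (ψ k)

lemma coe_klDiv_le_iSup_dvFunctional [IsProbabilityMeasure μ] [IsProbabilityMeasure ν]
    (hac : μ ≪ ν) : (klDiv μ ν : EReal) ≤ ⨆ ψ : X →ᵇ ℝ, (dvFunctional μ ν ψ : EReal) := by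
  have hnonneg : 0 ≤ ⨆ ψ : X →ᵇ ℝ, (dvFunctional μ ν ψ : EReal) :=
    le_iSup_of_le 0 (by simp [dvFunctional])
  rw [← EReal.coe_toENNReal hnonneg, EReal.coe_ennreal_le_coe_ennreal_iff]
  refine (klDiv_le_iSup_ofReal_dvFunctional_truncLog hac).trans (iSup_le fun n => ?_)
  rw [← EReal.real_coe_toENNReal]
  exact EReal.toENNReal_le_toENNReal (dvFunctional_le_iSup_boundedContinuous n.cast_nonneg
    ((measurable_truncLog n).comp (Measure.measurable_rnDeriv μ ν).ennreal_toReal)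
    fun x => abs_truncLog_le n _)

lemma iSup_dvFunctional_eq_top_of_not_absolutelyContinuous [IsProbabilityMeasure μ]
    [IsProbabilityMeasure ν] (h : ¬ μ ≪ ν) :
    ⨆ ψ : X →ᵇ ℝ, (dvFunctional μ ν ψ : EReal) = ⊤ := by
  obtain ⟨t, ht, hνt, hμt⟩ : ∃ t, MeasurableSet t ∧ ν t = 0 ∧ μ t ≠ 0 := by
    by_contra! H
    exact h (.mk fun t ht hνt => H t ht hνt)
  have hpos : 0 < μ.real t := ENNReal.toReal_pos hμt (measure_ne_top μ t)
  refine (EReal.eq_top_iff_forall_lt _).2 fun y => ?_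
  obtain ⟨n, hn⟩ := exists_nat_gt (y / μ.real t)
  set φ : X → ℝ := t.indicator fun _ => (n : ℝ)
  have hexp : (fun x => exp (φ x)) =ᵐ[ν] fun _ => 1 := by
    filter_upwards [measure_eq_zero_iff_ae_notMem.1 hνt] with x hx
    simp [φ, hx]
  have hφ : dvFunctional μ ν φ = μ.real t * n := by
    simp [dvFunctional, φ, integral_indicator_const _ ht, integral_congr_ae hexp]
  calc (y : EReal) < (μ.real t * n : ℝ) := EReal.coe_lt_coe_iff.2 ((div_lt_iff₀' hpos).1 hn)
    _ = dvFunctional μ ν φ := by rw [hφ]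
    _ ≤ _ := dvFunctional_le_iSup_boundedContinuous n.cast_nonneg
        (measurable_const.indicator ht) fun x => by by_cases hx : x ∈ t <;> simp [φ, hx]

end Metrizable

/-- Dual variational representation of the relative entropy:
`Ent(μ | ν) = sup_{φ ∈ C_b(X)} { ∫ φ dμ − log ∫ e^φ dν }`. -/
theorem ent_eq_iSup_boundedContinuous {X : Type*} [MeasurableSpace X] [TopologicalSpace X]
    [PolishSpace X] [BorelSpace X] (μ ν : Measure X)
    [IsProbabilityMeasure μ] [IsProbabilityMeasure ν] :
    Ent μ ν = ⨆ φ : BoundedContinuousFunction X ℝ,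
      ((∫ x, φ x ∂μ - Real.log (∫ x, Real.exp (φ x) ∂ν) : ℝ) : EReal) := by
  change Ent μ ν = ⨆ φ : X →ᵇ ℝ, (dvFunctional μ ν φ : EReal)
  rw [Ent_eq_klDiv]
  refine le_antisymm ?_ (iSup_le fun ψ => dvFunctional_le_klDiv (ψ.integrable μ)
    (integrable_exp_of_abs_le ψ.continuous.measurable ψ.norm_coe_le_norm))
  by_cases hac : μ ≪ ν
  · exact coe_klDiv_le_iSup_dvFunctional hac
  · rw [iSup_dvFunctional_eq_top_of_not_absolutelyContinuous hac]
    exact le_top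
end

section
/- For finite positive measures V, Ṽ on a Polish space X, the functional E(V | Ṽ) := sup over bounded continuous φ of (∫φ dV − ∫(e^φ − 1) dṼ) equals ∫ log(dV/dṼ) dV − V(X) + Ṽ(X) if V ≪ Ṽ, and +∞ otherwise. -/
open MeasureTheory

/-- The extended relative entropy functional for finite positive measures, defined via the
dual variational formula `E(V | Ṽ) = sup_{φ ∈ C_b(X)} { V(φ) − Ṽ(e^φ − 1) }`. -/
noncomputable def Efun {X : Type*} [MeasurableSpace X] [TopologicalSpace X]
    (V W : Measure X) : EReal :=
  ⨆ φ : BoundedContinuousFunction X ℝ,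
    ((∫ x, φ x ∂V - ∫ x, (Real.exp (φ x) - 1) ∂W : ℝ) : EReal)

/-!
Since `∫ φ dV = ∫ (dV/dW) φ dW`, integrating the Fenchel–Young inequality
`t s - (eˢ - 1) ≤ t log t + 1 - t = klFun t` against `W` bounds `E(V | W)` by `klDiv V W`, which
is the right-hand side. Conversely, `X` is metrizable, so bounded continuous functions are dense in
`L¹(V + W)`; as the objective is `L¹`-Lipschitz on uniformly bounded functions, bounded measurable
test functions may be used. For `ψₙ = log` of `dV/dW` clamped to `[e⁻ⁿ, eⁿ]` the integrands
`t ψₙ - (e^ψₙ - 1)` are nonnegative and tend to `klFun t`, and Fatou's lemma gives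
`klDiv V W ≤ E(V | W)`. If `V` is not absolutely continuous, multiples of the indicator of a
`W`-null set of positive `V`-mass make the objective unbounded.
-/

open Real Filter Topology InformationTheory

lemma mul_sub_exp_sub_one_le_klFun {t : ℝ} (ht : 0 ≤ t) (s : ℝ) :
    t * s - (exp s - 1) ≤ klFun t := by
  rw [klFun_apply]
  rcases ht.eq_or_lt with rfl | ht
  · simp [(exp_pos s).le]
  · have h := mul_le_mul_of_nonneg_left (add_one_le_exp (s - log t)) ht.le
    rw [exp_sub, exp_log ht, mul_div_cancel₀ _ ht.ne'] at h
    linarith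

-- The hypothesis says that `s` lies between `0` and `log t`.
lemma mul_sub_exp_sub_one_nonneg {t s : ℝ} (h : 0 ≤ s * (t - exp s)) :
    0 ≤ t * s - (exp s - 1) := by
  have h' := mul_le_mul_of_nonneg_left (add_one_le_exp (-s)) (exp_pos s).le
  rw [← exp_add, add_neg_cancel, exp_zero] at h'
  nlinarith

lemma exp_sub_exp_le_exp_mul_abs {a b C : ℝ} (ha : a ≤ C) :
    exp a - exp b ≤ exp C * |b - a| := by
  have h := mul_le_mul_of_nonneg_left (add_one_le_exp (b - a)) (exp_pos a).le
  rw [← exp_add, add_sub_cancel] at h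
  calc exp a - exp b ≤ exp a * (a - b) := by linarith
    _ ≤ exp a * |b - a| := by gcongr; rw [abs_sub_comm]; exact le_abs_self _
    _ ≤ exp C * |b - a| := by gcongr

-- Clamping before taking `log` sends `t = 0` to `-n` rather than to the junk value `log 0 = 0`.
noncomputable def logTrunc (n : ℕ) (t : ℝ) : ℝ := log (max (exp (-n)) (min t (exp n)))

lemma exp_logTrunc (n : ℕ) (t : ℝ) : exp (logTrunc n t) = max (exp (-n)) (min t (exp n)) :=
  exp_log ((exp_pos _).trans_le (le_max_left _ _))

lemma abs_logTrunc_le (n : ℕ) (t : ℝ) : |logTrunc n t| ≤ n := by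
  have hlo : exp (-n) ≤ exp n := exp_le_exp.2 (by linarith [(n.cast_nonneg : (0 : ℝ) ≤ n)])
  refine abs_le.2 ⟨?_, ?_⟩ <;> rw [← exp_le_exp, exp_logTrunc]
  exacts [le_max_left _ _, max_le hlo (min_le_right _ _)]

lemma measurable_logTrunc (n : ℕ) : Measurable (logTrunc n) := by
  unfold logTrunc; fun_prop

lemma logTrunc_eq_log {n : ℕ} {t : ℝ} (h : |log t| ≤ n) (ht : 0 < t) : logTrunc n t = log t := by
  rw [abs_le] at h
  have h1 : exp (-n) ≤ t := by rw [← exp_log ht]; exact exp_le_exp.2 (by linarith)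
  have h2 : t ≤ exp n := by rw [← exp_log ht]; exact exp_le_exp.2 (by linarith)
  rw [logTrunc, min_eq_left h2, max_eq_right h1]

lemma logTrunc_mul_sub_exp_nonneg (n : ℕ) (t : ℝ) :
    0 ≤ logTrunc n t * (t - exp (logTrunc n t)) := by
  have hn : (0 : ℝ) ≤ n := n.cast_nonneg
  have hlo : exp (-n) ≤ exp n := exp_le_exp.2 (by linarith)
  rw [exp_logTrunc, logTrunc]
  rcases le_total t (exp (-n)) with h | h
  · rw [max_eq_left (min_le_of_left_le h), log_exp]
    exact mul_nonneg_of_nonpos_of_nonpos (by linarith) (by linarith)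
  rcases le_total t (exp n) with h' | h'
  · simp [min_eq_left h', max_eq_right h]
  · rw [min_eq_right h', max_eq_right hlo, log_exp]
    exact mul_nonneg hn (by linarith)

lemma tendsto_mul_logTrunc_sub_exp {t : ℝ} (ht : 0 ≤ t) :
    Tendsto (fun n : ℕ => t * logTrunc n t - (exp (logTrunc n t) - 1)) atTop (𝓝 (klFun t)) := by
  rcases ht.eq_or_lt with rfl | ht
  · have h : ∀ n : ℕ, exp (logTrunc n 0) = exp (-n) := fun n => by
      rw [exp_logTrunc, min_eq_left (exp_pos _).le, max_eq_left (exp_pos _).le]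
    simp only [h, zero_mul, zero_sub, klFun_zero]
    have : Tendsto (fun n : ℕ => exp (-n)) atTop (𝓝 0) :=
      tendsto_exp_atBot.comp (tendsto_neg_atTop_atBot.comp tendsto_natCast_atTop_atTop)
    simpa using (this.sub_const 1).neg
  · refine tendsto_const_nhds.congr' ?_
    filter_upwards [eventually_ge_atTop ⌈|log t|⌉₊] with n hn
    rw [logTrunc_eq_log ((Nat.le_ceil _).trans (by exact_mod_cast hn)) ht, exp_log ht, klFun_apply]
    ring

open scoped BoundedContinuousFunction

section DualObjective

variable {X : Type*} [MeasurableSpace X] (V W : Measure X)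

noncomputable def dualObjective (ψ : X → ℝ) : ℝ := ∫ x, ψ x ∂V - ∫ x, (exp (ψ x) - 1) ∂W

lemma dualObjective_indicator_const {t : Set X} (ht : MeasurableSet t) (hWt : W t = 0) (c : ℝ) :
    dualObjective V W (t.indicator fun _ => c) = V.real t * c := by
  have hexp : (fun x => exp (t.indicator (fun _ => c) x) - 1) = t.indicator fun _ => exp c - 1 := by
    ext x; by_cases hx : x ∈ t <;> simp [hx]
  rw [dualObjective, hexp, integral_indicator_const _ ht, integral_indicator_const _ ht,
    measureReal_def W, hWt]
  simp

lemma integrable_of_abs_le {μ : Measure X} [IsFiniteMeasure μ] {g : X → ℝ} (hg : Measurable g)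
    {C : ℝ} (hC : ∀ x, |g x| ≤ C) : Integrable g μ :=
  .of_bound hg.aestronglyMeasurable C (ae_of_all _ hC)

lemma integrable_exp_of_abs_le_s6 {μ : Measure X} [IsFiniteMeasure μ] {g : X → ℝ} (hg : Measurable g)
    {C : ℝ} (hC : ∀ x, |g x| ≤ C) : Integrable (fun x => exp (g x)) μ :=
  integrable_of_abs_le hg.exp fun x => by
    rw [abs_of_pos (exp_pos _)]; exact exp_le_exp.2 ((le_abs_self _).trans (hC x))

lemma Efun_nonneg [TopologicalSpace X] [OpensMeasurableSpace X] : 0 ≤ Efun V W :=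
  le_iSup_of_le 0 (by simp)

variable {V W} [IsFiniteMeasure V] [IsFiniteMeasure W]

lemma dualObjective_le_add_integral_abs_sub {ψ φ : X → ℝ} {C : ℝ}
    (hψ : Measurable ψ) (hφ : Measurable φ) (hψC : ∀ x, |ψ x| ≤ C) (hφC : ∀ x, |φ x| ≤ C) :
    dualObjective V W ψ ≤ dualObjective V W φ + (1 + exp C) * ∫ x, |ψ x - φ x| ∂(V + W) := by
  have hdC : ∀ x, |ψ x - φ x| ≤ 2 * C := fun x => by
    linarith [abs_sub (ψ x) (φ x), hψC x, hφC x]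
  have hd {μ : Measure X} [IsFiniteMeasure μ] : Integrable (fun x => |ψ x - φ x|) μ :=
    integrable_of_abs_le (hψ.sub hφ).abs fun x => (abs_abs _).trans_le (hdC x)
  have hexp {g : X → ℝ} (hg : Measurable g) (hgC : ∀ x, |g x| ≤ C) :
      Integrable (fun x => exp (g x) - 1) W :=
    (integrable_exp_of_abs_le_s6 hg hgC).sub (integrable_const 1)
  have hV : ∫ x, ψ x ∂V - ∫ x, φ x ∂V ≤ ∫ x, |ψ x - φ x| ∂V := by
    rw [← integral_sub (integrable_of_abs_le hψ hψC) (integrable_of_abs_le hφ hφC)]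
    exact integral_mono (integrable_of_abs_le (hψ.sub hφ) hdC) hd fun x => le_abs_self _
  have hW : ∫ x, (exp (φ x) - 1) ∂W - ∫ x, (exp (ψ x) - 1) ∂W
      ≤ exp C * ∫ x, |ψ x - φ x| ∂W := by
    rw [← integral_sub (hexp hφ hφC) (hexp hψ hψC), ← integral_const_mul]
    refine integral_mono ((hexp hφ hφC).sub (hexp hψ hψC)) (hd.const_mul _) fun x => ?_
    simpa using exp_sub_exp_le_exp_mul_abs (b := ψ x) ((le_abs_self _).trans (hφC x))
  have hV0 : 0 ≤ ∫ x, |ψ x - φ x| ∂V := integral_nonneg fun x => abs_nonneg _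
  have hW0 : 0 ≤ ∫ x, |ψ x - φ x| ∂W := integral_nonneg fun x => abs_nonneg _
  rw [integral_add_measure hd hd]
  unfold dualObjective
  nlinarith [exp_pos C]

lemma dualObjective_le_Efun [TopologicalSpace X] [TopologicalSpace.PseudoMetrizableSpace X]
    [BorelSpace X] {ψ : X → ℝ} (hψ : Measurable ψ) {C : ℝ} (hψC : ∀ x, |ψ x| ≤ C) :
    (dualObjective V W ψ : EReal) ≤ Efun V W := by
  refine EReal.ge_of_forall_gt_iff_ge.1 fun z hz => ?_
  have hε : 0 < (dualObjective V W ψ - z) / (1 + exp C) :=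
    div_pos (sub_pos.2 (EReal.coe_lt_coe_iff.1 hz)) (by positivity)
  have hψ' : Integrable ψ (V + W) := integrable_of_abs_le hψ hψC
  obtain ⟨g, hg, hg_int⟩ := hψ'.exists_boundedContinuous_integral_sub_le hε
  let φ : X →ᵇ ℝ := (g ⊔ .const X (-C)) ⊓ .const X C
  have hφ : ∀ x, φ x = min (max (g x) (-C)) C := fun x => rfl
  have hφC : ∀ x, |φ x| ≤ C := fun x => by
    have hC : 0 ≤ C := (abs_nonneg _).trans (hψC x)
    rw [hφ, abs_le]
    exact ⟨le_min (le_max_right _ _) (by linarith), min_le_right _ _⟩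
  have hφg : ∀ x, |ψ x - φ x| ≤ ‖ψ x - g x‖ := fun x => by
    obtain ⟨hlo, hhi⟩ := abs_le.1 (hψC x)
    calc |ψ x - φ x| = |min (max (ψ x) (-C)) C - min (max (g x) (-C)) C| := by
          rw [max_eq_left hlo, min_eq_left hhi, hφ]
      _ ≤ max |max (ψ x) (-C) - max (g x) (-C)| |C - C| := abs_min_sub_min_le_max _ _ _ _
      _ ≤ ‖ψ x - g x‖ := by
          simpa [Real.norm_eq_abs] using abs_max_sub_max_le_abs (ψ x) (g x) (-C)
  have hclose : (1 + exp C) * ∫ x, |ψ x - φ x| ∂(V + W) ≤ dualObjective V W ψ - z := by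
    rw [← le_div_iff₀' (by positivity)]
    exact (integral_mono (hψ'.sub (integrable_of_abs_le φ.continuous.measurable hφC)).abs
      (hψ'.sub hg_int).norm hφg).trans hg
  have hz : z ≤ dualObjective V W φ := by
    linarith [dualObjective_le_add_integral_abs_sub (V := V) (W := W) hψ φ.continuous.measurable
      hψC hφC]
  exact (EReal.coe_le_coe_iff.2 hz).trans
    (le_iSup (fun φ : X →ᵇ ℝ => (dualObjective V W φ : EReal)) φ)

lemma Efun_eq_top_of_not_absolutelyContinuous [TopologicalSpace X]
    [TopologicalSpace.PseudoMetrizableSpace X] [BorelSpace X] (h : ¬ V ≪ W) : Efun V W = ⊤ := by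
  obtain ⟨t, ht, hWt, hVt⟩ : ∃ t, MeasurableSet t ∧ W t = 0 ∧ V t ≠ 0 := by
    by_contra! h'
    exact h (.mk fun t ht hWt => h' t ht hWt)
  have hVt' : 0 < V.real t := ENNReal.toReal_pos hVt (measure_ne_top V t)
  refine (EReal.eq_top_iff_forall_lt _).2 fun y => ?_
  set c := (y + 1) / V.real t
  have hc := dualObjective_le_Efun (V := V) (W := W) (measurable_const (a := c) |>.indicator ht)
    (C := |c|) fun x => by by_cases hx : x ∈ t <;> simp [hx]
  rw [dualObjective_indicator_const V W ht hWt, mul_div_cancel₀ _ hVt'.ne'] at hc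
  exact (EReal.coe_lt_coe_iff.2 (lt_add_one y)).trans_le hc

lemma integrable_rnDeriv_mul_sub_exp (hVW : V ≪ W) {ψ : X → ℝ} (hψV : Integrable ψ V)
    (hψW : Integrable (fun x => exp (ψ x)) W) :
    Integrable (fun x => (V.rnDeriv W x).toReal * ψ x - (exp (ψ x) - 1)) W :=
  ((integrable_rnDeriv_smul_iff hVW).2 hψV).sub (hψW.sub (integrable_const 1))

lemma dualObjective_eq_integral_rnDeriv (hVW : V ≪ W) {ψ : X → ℝ} (hψV : Integrable ψ V)
    (hψW : Integrable (fun x => exp (ψ x)) W) :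
    dualObjective V W ψ = ∫ x, ((V.rnDeriv W x).toReal * ψ x - (exp (ψ x) - 1)) ∂W := by
  have h1 : Integrable (fun x => (V.rnDeriv W x).toReal • ψ x) W :=
    (integrable_rnDeriv_smul_iff hVW).2 hψV
  have h2 : Integrable (fun x => exp (ψ x) - 1) W := hψW.sub (integrable_const 1)
  rw [dualObjective, ← integral_rnDeriv_smul hVW, ← integral_sub h1 h2]
  rfl

lemma dualObjective_le_klDiv {ψ : X → ℝ} (hψV : Integrable ψ V)
    (hψW : Integrable (fun x => exp (ψ x)) W) : (dualObjective V W ψ : EReal) ≤ klDiv V W := by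
  by_cases h : V ≪ W ∧ Integrable (llr V W) V
  · rw [klDiv_eq_integral_klFun, if_pos h, EReal.coe_ennreal_ofReal,
      dualObjective_eq_integral_rnDeriv h.1 hψV hψW]
    refine EReal.coe_le_coe_iff.2 (le_max_of_le_left (integral_mono
      (integrable_rnDeriv_mul_sub_exp h.1 hψV hψW) ((integrable_klFun_rnDeriv_iff h.1).2 h.2)
      fun x => mul_sub_exp_sub_one_le_klFun ENNReal.toReal_nonneg _))
  · rw [klDiv_eq_top_iff.2 fun hac hint => h ⟨hac, hint⟩, EReal.coe_ennreal_top]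
    exact le_top

lemma klDiv_le_Efun_of_absolutelyContinuous [TopologicalSpace X]
    [TopologicalSpace.PseudoMetrizableSpace X] [BorelSpace X] (hVW : V ≪ W) :
    (klDiv V W : EReal) ≤ Efun V W := by
  set f : X → ℝ := fun x => (V.rnDeriv W x).toReal
  set ψ : ℕ → X → ℝ := fun n x => logTrunc n (f x)
  set g : ℕ → X → ℝ := fun n x => f x * ψ n x - (exp (ψ n x) - 1)
  have hψ n : Measurable (ψ n) :=
    (measurable_logTrunc n).comp (Measure.measurable_rnDeriv V W).ennreal_toReal
  have hψC n x : |ψ n x| ≤ n := abs_logTrunc_le n (f x)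
  have hg n : ENNReal.ofReal (dualObjective V W (ψ n)) = ∫⁻ x, ENNReal.ofReal (g n x) ∂W := by
    rw [dualObjective_eq_integral_rnDeriv hVW (integrable_of_abs_le (hψ n) (hψC n))
      (integrable_exp_of_abs_le_s6 (hψ n) (hψC n))]
    exact ofReal_integral_eq_lintegral_ofReal (integrable_rnDeriv_mul_sub_exp hVW
      (integrable_of_abs_le (hψ n) (hψC n)) (integrable_exp_of_abs_le_s6 (hψ n) (hψC n)))
      (ae_of_all _ fun x => mul_sub_exp_sub_one_nonneg (logTrunc_mul_sub_exp_nonneg n (f x)))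
  have key : klDiv V W ≤ (Efun V W).toENNReal := calc
    klDiv V W = ∫⁻ x, ENNReal.ofReal (klFun (f x)) ∂W := klDiv_eq_lintegral_klFun_of_ac hVW
    _ = ∫⁻ x, liminf (fun n => ENNReal.ofReal (g n x)) atTop ∂W := lintegral_congr fun x =>
      ((ENNReal.continuous_ofReal.tendsto _).comp
        (tendsto_mul_logTrunc_sub_exp ENNReal.toReal_nonneg)).liminf_eq.symm
    _ ≤ liminf (fun n => ∫⁻ x, ENNReal.ofReal (g n x) ∂W) atTop :=
      lintegral_liminf_le fun n => by fun_prop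
    _ ≤ (Efun V W).toENNReal := liminf_le_of_frequently_le' <| .of_forall fun n =>
      hg n ▸ EReal.toENNReal_le_toENNReal (dualObjective_le_Efun (hψ n) (hψC n))
  rw [← EReal.coe_toENNReal (Efun_nonneg V W)]
  exact EReal.coe_ennreal_le_coe_ennreal_iff.2 key

theorem Efun_eq_klDiv [TopologicalSpace X] [TopologicalSpace.PseudoMetrizableSpace X]
    [BorelSpace X] : Efun V W = klDiv V W := by
  refine le_antisymm (iSup_le fun φ => dualObjective_le_klDiv (φ.integrable V) ?_) ?_
  · exact integrable_exp_of_abs_le_s6 φ.continuous.measurable fun x => by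
      simpa using φ.norm_coe_le_norm x
  · by_cases hVW : V ≪ W
    · exact klDiv_le_Efun_of_absolutelyContinuous hVW
    · rw [Efun_eq_top_of_not_absolutelyContinuous hVW]
      exact le_top

open scoped Classical in
lemma coe_klDiv_eq_ite : (klDiv V W : EReal) = if V ≪ W ∧ Integrable (llr V W) V
    then ((∫ x, llr V W x ∂V - V.real Set.univ + W.real Set.univ : ℝ) : EReal) else ⊤ := by
  split_ifs with h
  · rw [klDiv_of_ac_of_integrable h.1 h.2, EReal.coe_ennreal_ofReal,
      max_eq_left (integral_llr_add_sub_measure_univ_nonneg h.1 h.2)]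
    congr 1
    ring
  · rw [klDiv_eq_top_iff.2 fun hac hint => h ⟨hac, hint⟩, EReal.coe_ennreal_top]

end DualObjective

open scoped Classical in
/-- `E(V | Ṽ)` equals `∫ log(dV/dṼ) dV − V(X) + Ṽ(X)` if `V ≪ Ṽ`, and `+∞` otherwise. -/
theorem Efun_eq {X : Type*} [MeasurableSpace X] [TopologicalSpace X] [PolishSpace X]
    [BorelSpace X] (V W : Measure X) [IsFiniteMeasure V] [IsFiniteMeasure W] :
    Efun V W =
      if V ≪ W ∧ Integrable (fun x => Real.log ((V.rnDeriv W x).toReal)) V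
      then ((∫ x, Real.log ((V.rnDeriv W x).toReal) ∂V
              - (V Set.univ).toReal + (W Set.univ).toReal : ℝ) : EReal)
      else ⊤ :=
  Efun_eq_klDiv.trans coe_klDiv_eq_ite
end

section
/- If P^N_0 ∈ P(Σ^N_e) is P_0-entropically chaotic, i.e. (1/N)Ent(P^N_0 | α^N) → Ent(P_0 | M_e), and the laws Ξ^N_0 of the empirical measure converge weakly to δ_{P_0}, and the pushforwards μ^N = (π^N)_# α^N satisfy a large deviation lower bound with rate function H_e implying liminf (1/N)Ent(Ξ^N_0 | μ^N) ≥ H_e(P_0), then Ent(P_0 | M_e) = H_e(P_0), and consequently P_0(|v|²/2) = e. -/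
open MeasureTheory Filter

/-- The Maxwellian on `ℝ^d` with zero mean and energy `e` (inverse temperature `β = d/(2e)`). -/
noncomputable def maxwellian (d : ℕ) (e : ℝ) : Measure (EuclideanSpace ℝ (Fin d)) :=
  volume.withDensity fun v => ENNReal.ofReal
    (((d / (2 * e)) / (2 * Real.pi)) ^ ((d : ℝ) / 2) *
      Real.exp (-(d / (2 * e)) * (‖v‖ ^ 2 / 2)))

/-- If the initial data are `P_0`-entropically chaotic, i.e.
`(1/N) Ent(P^N_0 | α^N) → Ent(P_0 | M_e)`, the data-processing inequality
`Ent(P^N_0 | α^N) ≥ Ent(Ξ^N_0 | μ^N)` holds, and the large deviation lower bound gives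
`liminf (1/N) Ent(Ξ^N_0 | μ^N) ≥ H_e(P_0)`, then `Ent(P_0 | M_e) = H_e(P_0)` and
consequently `P_0(|v|²/2) = e`. -/
theorem entropic_chaoticity_forces_energy (d : ℕ) (hd : 0 < d) (e : ℝ) (he : 0 < e)
    (P0 : Measure (EuclideanSpace ℝ (Fin d))) [IsProbabilityMeasure P0]
    (hmom : Integrable (fun v => ‖v‖ ^ 2 / 2) P0)
    (hmomle : (∫ v, ‖v‖ ^ 2 / 2 ∂P0) ≤ e)
    -- `EntN N = Ent(P^N_0 | α^N)` and `EntXi N = Ent(Ξ^N_0 | μ^N)`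
    (EntN EntXi : ℕ → ℝ)
    (EntP0 He : ℝ)
    (hEntP0 : EntP0 = ∫ v, Real.log ((P0.rnDeriv (maxwellian d e) v).toReal) ∂P0)
    (hHe : He = EntP0 + ((d : ℝ) / (2 * e)) * (e - ∫ v, ‖v‖ ^ 2 / 2 ∂P0))
    -- entropic chaoticity
    (hchaos : Tendsto (fun N : ℕ => EntN N / N) atTop (nhds EntP0))
    -- data-processing inequality
    (hdp : ∀ N, EntXi N ≤ EntN N)
    -- large deviation lower bound
    (hld : (He : EReal) ≤ liminf (fun N : ℕ => ((EntXi N / N : ℝ) : EReal)) atTop) :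
    EntP0 = He ∧ (∫ v, ‖v‖ ^ 2 / 2 ∂P0) = e := by
  have h1 : ∀ N : ℕ, EntXi N / N ≤ EntN N / N := by
    intro N
    rcases Nat.eq_zero_or_pos N with h | h
    · subst h; simp
    · exact div_le_div_of_nonneg_right (hdp N) (Nat.cast_nonneg N)
  have htend : Tendsto (fun N : ℕ => ((EntN N / N : ℝ) : EReal)) atTop
      (nhds (EntP0 : EReal)) := by
    exact (EReal.tendsto_coe).mpr hchaos
  have hle : liminf (fun N : ℕ => ((EntXi N / N : ℝ) : EReal)) atTop ≤
      liminf (fun N : ℕ => ((EntN N / N : ℝ) : EReal)) atTop := by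
    refine liminf_le_liminf (Eventually.of_forall fun N => ?_)
    exact_mod_cast h1 N
  have hlim : liminf (fun N : ℕ => ((EntN N / N : ℝ) : EReal)) atTop = (EntP0 : EReal) :=
    htend.liminf_eq
  have hHele : He ≤ EntP0 := by
    have := hld.trans (hle.trans_eq hlim)
    exact_mod_cast this
  have hc : 0 < (d : ℝ) / (2 * e) := by positivity
  have ht : 0 ≤ e - ∫ v, ‖v‖ ^ 2 / 2 ∂P0 := by linarith
  have hterm : 0 ≤ ((d : ℝ) / (2 * e)) * (e - ∫ v, ‖v‖ ^ 2 / 2 ∂P0) :=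
    mul_nonneg hc.le ht
  have hzero : ((d : ℝ) / (2 * e)) * (e - ∫ v, ‖v‖ ^ 2 / 2 ∂P0) = 0 := by linarith [hHele, hHe.ge]
  constructor
  · linarith [hHe.ge]
  · rcases mul_eq_zero.mp hzero with h | h
    · exact absurd h hc.ne'
    · linarith
end
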